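/- Let G be a finite simple graph on n vertices. Then θ(G) ≤ n − 1 if and only if for every pair of distinct vertices u and v of G one has N(v) \ {u} ≠ N(u) \ {v}, where N(w) denotes the set of neighbors of w. -/

import Mathlib

open SimpleGraph

def IsDistinguishing {V : Type*} {k : ℕ} (G : SimpleGraph V) (c : V → Fin k) : Prop :=
  ∀ α : G ≃g G, (∀ v, c (α v) = c v) → ∀ v, α v = v

noncomputable def Phi {V : Type*} (G : SimpleGraph V) (k : ℕ) : ℕ :=
  Nat.card (Quot (fun c₁ c₂ : {c : V → Fin k // IsDistinguishing G c} =>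
    ∃ α : G ≃g G, ∀ v, c₁.1 v = c₂.1 (α v)))

noncomputable def phi {V : Type*} (G : SimpleGraph V) (k : ℕ) : ℕ :=
  Nat.card (Quot (fun c₁ c₂ : {c : V → Fin k // IsDistinguishing G c ∧ Function.Surjective c} =>
    ∃ α : G ≃g G, ∀ v, c₁.1 v = c₂.1 (α v)))

noncomputable def theta {V : Type*} (G : SimpleGraph V) : ℕ :=
  sInf {t | ∀ k, t ≤ k → ∀ c : V → Fin k, Function.Surjective c → IsDistinguishing G c}

def stirling2 : ℕ → ℕ → ℕ
  | 0, 0 => 1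
  | 0, _ + 1 => 0
  | _ + 1, 0 => 0
  | n + 1, k + 1 => (k + 1) * stirling2 n (k + 1) + stirling2 n k

def IsDCPartition {V : Type*} [DecidableEq V] [Fintype V] (G : SimpleGraph V)
    (P : Finpartition (Finset.univ : Finset V)) : Prop :=
  ∀ α : G ≃g G, (∀ p ∈ P.parts, p.image ⇑α = p) → ∀ v, α v = v

def IsDPartition {V : Type*} [DecidableEq V] [Fintype V] (G : SimpleGraph V)
    (P : Finpartition (Finset.univ : Finset V)) : Prop :=
  ∀ α : G ≃g G, P.parts.image (fun p => p.image ⇑α) = P.parts → ∀ v, α v = v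

def PartEquiv {V : Type*} [DecidableEq V] [Fintype V] (G : SimpleGraph V)
    (P₁ P₂ : Finpartition (Finset.univ : Finset V)) : Prop :=
  ∃ α : G ≃g G, P₁.parts.image (fun p => p.image ⇑α) = P₂.parts

noncomputable def psi {V : Type*} [DecidableEq V] [Fintype V] (G : SimpleGraph V) (k : ℕ) : ℕ :=
  Nat.card (Quot (fun P₁ P₂ : {P : Finpartition (Finset.univ : Finset V) //
      IsDCPartition G P ∧ P.parts.card = k} => PartEquiv G P₁.1 P₂.1))

noncomputable def PsiAtMost {V : Type*} [DecidableEq V] [Fintype V] (G : SimpleGraph V) (k : ℕ) : ℕ :=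
  Nat.card (Quot (fun P₁ P₂ : {P : Finpartition (Finset.univ : Finset V) //
      IsDCPartition G P ∧ P.parts.card ≤ k} => PartEquiv G P₁.1 P₂.1))

noncomputable def PiAtMost {V : Type*} [DecidableEq V] [Fintype V] (G : SimpleGraph V) (k : ℕ) : ℕ :=
  Nat.card (Quot (fun P₁ P₂ : {P : Finpartition (Finset.univ : Finset V) //
      P.parts.card ≤ k} => PartEquiv G P₁.1 P₂.1))

noncomputable def XiAtMost {V : Type*} [DecidableEq V] [Fintype V] (G : SimpleGraph V) (k : ℕ) : ℕ :=
  Nat.card (Quot (fun P₁ P₂ : {P : Finpartition (Finset.univ : Finset V) //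
      IsDPartition G P ∧ P.parts.card ≤ k} => PartEquiv G P₁.1 P₂.1))

def kneserGraph2 (n : ℕ) : SimpleGraph {s : Finset (Fin n) // s.card = 2} where
  Adj a b := Disjoint a.1 b.1
  symm := ⟨fun a b h => h.symm⟩
  loopless := ⟨by
    rintro ⟨s, hs⟩ h
    simp only [disjoint_self, Finset.bot_eq_empty] at h
    simp [h] at hs⟩

def lexProd {V W : Type*} (X : SimpleGraph V) (Y : SimpleGraph W) : SimpleGraph (V × W) where
  Adj a b := X.Adj a.1 b.1 ∨ (a.1 = b.1 ∧ Y.Adj a.2 b.2)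
  symm := ⟨by
    rintro ⟨x, y⟩ ⟨x', y'⟩ (h | ⟨h, h'⟩)
    · exact Or.inl h.symm
    · exact Or.inr ⟨h.symm, h'.symm⟩⟩
  loopless := ⟨by
    rintro ⟨x, y⟩ (h | ⟨-, h⟩)
    · exact X.loopless.irrefl x h
    · exact Y.loopless.irrefl y h⟩

def IsNaturalAut {V W : Type*} (X : SimpleGraph V) (Y : SimpleGraph W)
    (μ : lexProd X Y ≃g lexProd X Y) : Prop :=
  ∀ x : V, ∃ x' : V, (fun p => μ p) '' ({x} ×ˢ (Set.univ : Set W)) = {x'} ×ˢ (Set.univ : Set W)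

noncomputable def distNumber {V : Type*} (G : SimpleGraph V) : ℕ :=
  sInf {k | ∃ c : V → Fin k, IsDistinguishing G c}

/-! A surjective colouring with at least `n = |V|` colours is injective, hence distinguishing.
With `n - 1` colours exactly one pair `u ≠ v` shares a colour, so the only candidate for a
non-trivial colour-preserving automorphism is the transposition `(u v)`, and it is an
automorphism exactly when `N(v) \ {u} = N(u) \ {v}`. -/

namespace SimpleGraph

variable {V : Type*} {G : SimpleGraph V}

theorem adj_swap_iff_neighborSet_sdiff_eq [DecidableEq V] {u v : V} :
    (∀ a b, G.Adj (Equiv.swap u v a) (Equiv.swap u v b) ↔ G.Adj a b) ↔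
      G.neighborSet v \ {u} = G.neighborSet u \ {v} := by
  constructor
  · intro h
    ext w
    have := h v w
    simp only [Set.mem_sdiff, mem_neighborSet, Set.mem_singleton_iff]
    rcases eq_or_ne w u with rfl | hwu
    · simp
    rcases eq_or_ne w v with rfl | hwv
    · simp
    rw [Equiv.swap_apply_right, Equiv.swap_apply_of_ne_of_ne hwu hwv] at this
    simp [this, hwu, hwv]
  · intro h a b
    have hN : ∀ w, w ≠ u → w ≠ v → (G.Adj v w ↔ G.Adj u w) := fun w hwu hwv => by
      simpa [hwu, hwv] using Set.ext_iff.1 h w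
    simp only [Equiv.swap_apply_def]
    split_ifs <;> subst_vars <;> grind [adj_comm, G.loopless.irrefl]

end SimpleGraph

theorem Equiv.Perm.eq_one_or_eq_swap_of_forall {α : Type*} [DecidableEq α] {σ : Equiv.Perm α}
    {u v : α} (h : ∀ x, σ x = x ∨ σ x = Equiv.swap u v x) : σ = 1 ∨ σ = Equiv.swap u v := by
  have hu := h u
  have hv := h v
  rw [Equiv.swap_apply_left] at hu
  rw [Equiv.swap_apply_right] at hv
  rcases hu with hu | hu
  · left
    ext x
    rcases h x with hx | hx
    · exact hx
    · grind [Equiv.apply_eq_iff_eq, Equiv.Perm.one_apply]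
  · right
    ext x
    rcases h x with hx | hx
    · grind [Equiv.apply_eq_iff_eq]
    · exact hx

/-- The fibres of `c` are the orbits of `swap u v`. -/
theorem Function.Surjective.eq_or_eq_swap_of_card_eq_add_one {α β : Type*} [Fintype α]
    [Fintype β] [DecidableEq α] {c : α → β} (hc : Function.Surjective c)
    (hcard : Fintype.card α = Fintype.card β + 1) {u v : α} (huv : u ≠ v) (h : c u = c v)
    {a b : α} (hab : c a = c b) : a = b ∨ a = Equiv.swap u v b := by
  classical
  have himage : (Finset.univ.erase v).image c = Finset.univ := by
    refine Finset.eq_univ_of_forall fun y => ?_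
    obtain ⟨w, rfl⟩ := hc y
    rcases eq_or_ne w v with rfl | hwv
    · exact Finset.mem_image.2 ⟨u, Finset.mem_erase.2 ⟨huv, Finset.mem_univ u⟩, h⟩
    · exact Finset.mem_image_of_mem c (Finset.mem_erase.2 ⟨hwv, Finset.mem_univ w⟩)
  have hinj : Set.InjOn c (Finset.univ.erase v : Finset α) := Finset.injOn_of_card_image_eq <| by
    rw [himage, Finset.card_univ, Finset.card_erase_of_mem (Finset.mem_univ v), Finset.card_univ,
      hcard, Nat.add_sub_cancel]
  have hinj' : ∀ x y, x ≠ v → y ≠ v → c x = c y → x = y := fun x y hx hy =>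
    @hinj x (by simpa using hx) y (by simpa using hy)
  rw [Equiv.swap_apply_def]
  grind

theorem exists_surjective_fin_card_sub_one {α : Type*} [Fintype α] {u v : α} (huv : u ≠ v) :
    ∃ c : α → Fin (Fintype.card α - 1), Function.Surjective c ∧ c u = c v := by
  classical
  let e : {x // x ≠ v} ≃ Fin (Fintype.card α - 1) :=
    Fintype.equivFinOfCardEq (by simp [Fintype.card_subtype_compl])
  let f : α → {x // x ≠ v} := fun x => if h : x = v then ⟨u, huv⟩ else ⟨x, h⟩
  have hf : Function.Surjective f := fun x => ⟨x, by simp [f, x.2]⟩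
  exact ⟨e ∘ f, e.surjective.comp hf, by simp [f, huv]⟩

theorem IsDistinguishing.of_injective {V : Type*} {k : ℕ} {G : SimpleGraph V} {c : V → Fin k}
    (hc : Function.Injective c) : IsDistinguishing G c :=
  fun _ hα v => hc (hα v)

theorem theta_le_iff {V : Type*} [Finite V] {G : SimpleGraph V} {t : ℕ} :
    theta G ≤ t ↔ ∀ k, t ≤ k → ∀ c : V → Fin k, Function.Surjective c → IsDistinguishing G c := by
  have hcard : Nat.card V ∈
      {t | ∀ k, t ≤ k → ∀ c : V → Fin k, Function.Surjective c → IsDistinguishing G c} :=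
    fun k hk c hc => IsDistinguishing.of_injective ((Nat.bijective_iff_surjective_and_card c).2
      ⟨hc, le_antisymm (by simpa using hk) (by simpa using Nat.card_le_card_of_surjective c hc)⟩).1
  exact ⟨fun h k hk => Nat.sInf_mem ⟨_, hcard⟩ k (h.trans hk), fun h => Nat.sInf_le h⟩

theorem isDistinguishing_of_surjective_of_card_le_add_one {V : Type*} [Fintype V]
    {G : SimpleGraph V} (hN : ∀ u v : V, u ≠ v → G.neighborSet v \ {u} ≠ G.neighborSet u \ {v})
    {k : ℕ} (hk : Fintype.card V ≤ k + 1) {c : V → Fin k} (hc : Function.Surjective c) :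
    IsDistinguishing G c := by
  classical
  intro α hα
  by_cases hinj : Function.Injective c
  · exact IsDistinguishing.of_injective hinj α hα
  obtain ⟨u, v, hcuv, huv⟩ : ∃ u v, c u = c v ∧ u ≠ v := by
    simpa [Function.Injective] using hinj
  have hcard : Fintype.card V = Fintype.card (Fin k) + 1 := by
    have := Fintype.card_lt_of_surjective_not_injective c hc hinj
    rw [Fintype.card_fin] at this ⊢
    omega
  rcases Equiv.Perm.eq_one_or_eq_swap_of_forall (σ := α.toEquiv)
    (fun x => hc.eq_or_eq_swap_of_card_eq_add_one hcard huv hcuv (hα x)) with hid | hswap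
  · exact fun x => congrArg (· x) hid
  · refine absurd (SimpleGraph.adj_swap_iff_neighborSet_sdiff_eq.1 fun a b => ?_) (hN u v huv)
    rw [← hswap]
    exact α.map_adj_iff

theorem theta_le_card_sub_one_iff (V : Type*) [Fintype V] (G : SimpleGraph V) :
    theta G ≤ Fintype.card V - 1 ↔
      ∀ u v : V, u ≠ v → G.neighborSet v \ {u} ≠ G.neighborSet u \ {v} := by
  classical
  rw [theta_le_iff]
  constructor
  · intro h u v huv hN
    obtain ⟨c, hc, hcuv⟩ := exists_surjective_fin_card_sub_one huv
    let σ : G ≃g G := ⟨Equiv.swap u v, SimpleGraph.adj_swap_iff_neighborSet_sdiff_eq.2 hN _ _⟩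
    have hσu : σ u = u := h _ le_rfl c hc σ (Equiv.apply_swap_eq_self hcuv) u
    exact huv ((Equiv.swap_apply_left u v).symm.trans hσu).symm
  · intro hN k hk c hc
    exact isDistinguishing_of_surjective_of_card_le_add_one hN (by omega) hc
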